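/- Let N ≥ 2, let f : ℝ → ℝ be concave on [0,1] with f(0) = 0 and f(x) ≥ 0 for x ∈ [0,1], and let l : ℝ → ℝ be convex and non-increasing on [1/N, 1] with f(x) = x·l(x) for all x ∈ (0,1]. Let (w¹, P¹) (with K₁ ≥ 1 cells) and (w², P²) (with K₂ ≥ 1 cells) be two configurations on the same N classes, with confidences e₁ and e₂ and f-impurities I₁ and I₂ respectively. If e₁ ≥ e₂, then l(e₁)·I₁ ≤ (f(e₁) + (N−1)·f((1−e₁)/(N−1)))·I₂. (Paper's Theorem 5: a configuration maximizing the confidence yields an R(e^max) = u(e^max)/l(e^max) approximation of the minimum impurity.) -/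

import Mathlib

/-!
If `M` is the largest probability of a cell, its impurity `∑ f(pᵢ)` lies between `l(M)` and
`u(M) = f(M) + (N - 1) f((1 - M)/(N - 1))`: concavity with `f 0 = 0` gives
`f(pᵢ) ≥ (pᵢ / M) f(M) = pᵢ l(M)`, and Jensen over the `N - 1` other classes gives the upper
bound. Averaging over the cells, concavity of `u` and convexity of `l` transfer these bounds to
the confidence: `I₁ ≤ u(e₁)` and `I₂ ≥ l(e₂) ≥ l(e₁)`, since `l` is non-increasing.
-/

open Finset

/-- The maximum of a real-valued vector over the finite index set `Fin N` (`N > 0`). -/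
noncomputable def colMax {N : ℕ} (hN : 0 < N) (v : Fin N → ℝ) : ℝ :=
  Finset.univ.sup' (Finset.univ_nonempty_iff.mpr ⟨⟨0, hN⟩⟩) v

section Concave

variable {f : ℝ → ℝ} {S : Set ℝ}

lemma ConcaveOn.sum_map_le_card_mul_map_average {ι : Type*} (hf : ConcaveOn ℝ S f)
    {s : Finset ι} (hs : s.Nonempty) {p : ι → ℝ} (hp : ∀ i ∈ s, p i ∈ S) :
    ∑ i ∈ s, f (p i) ≤ #s * f ((∑ i ∈ s, p i) / #s) := by
  have hcard : (0 : ℝ) < #s := by exact_mod_cast hs.card_pos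
  have hJensen := hf.le_map_sum (w := fun _ => (#s : ℝ)⁻¹) (fun _ _ => by positivity)
    (by simp [hcard.ne']) hp
  simp only [smul_eq_mul, ← mul_sum] at hJensen
  rwa [inv_mul_eq_div, inv_mul_eq_div, div_le_iff₀' hcard] at hJensen

lemma ConcaveOn.mul_map_le_map_mul (hf : ConcaveOn ℝ S f) (hS : 0 ∈ S) (hf0 : f 0 = 0)
    {x t : ℝ} (hx : x ∈ S) (ht₀ : 0 ≤ t) (ht₁ : t ≤ 1) : t * f x ≤ f (t * x) := by
  simpa [hf0] using hf.2 hx hS ht₀ (sub_nonneg.2 ht₁) (add_sub_cancel t 1)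

end Concave

/-- The paper's `u`: for concave `f`, the largest `f`-impurity of a distribution on `N` classes
whose largest probability is `t`, attained by spreading `1 - t` evenly over the other classes. -/
noncomputable def maxImpurity (f : ℝ → ℝ) (N : ℕ) (t : ℝ) : ℝ :=
  f t + ((N : ℝ) - 1) * f ((1 - t) / ((N : ℝ) - 1))

section maxImpurity

variable {f : ℝ → ℝ} {N : ℕ}

lemma one_sub_div_mem_Icc (hN : 2 ≤ N) {t : ℝ} (ht : t ∈ Set.Icc (1 / (N : ℝ)) 1) :
    (1 - t) / ((N : ℝ) - 1) ∈ Set.Icc 0 1 := by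
  have hN₂ : (2 : ℝ) ≤ N := by exact_mod_cast hN
  have hN₁ : (0 : ℝ) < (N : ℝ) - 1 := by linarith
  have : (0 : ℝ) ≤ 1 / N := by positivity
  rw [Set.mem_Icc, div_le_one hN₁]
  exact ⟨div_nonneg (by linarith [ht.2]) hN₁.le, by linarith [ht.1]⟩

lemma maxImpurity_nonneg (hN : 2 ≤ N) (hf : ∀ x ∈ Set.Icc (0 : ℝ) 1, 0 ≤ f x) {t : ℝ}
    (ht : t ∈ Set.Icc (1 / (N : ℝ)) 1) : 0 ≤ maxImpurity f N t := by
  have hN₁ : (1 : ℝ) ≤ N := by exact_mod_cast (by omega : 1 ≤ N)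
  have : (0 : ℝ) ≤ 1 / N := by positivity
  exact add_nonneg (hf t ⟨by linarith [ht.1], ht.2⟩)
    (mul_nonneg (by linarith) (hf _ (one_sub_div_mem_Icc hN ht)))

lemma concaveOn_maxImpurity (hN : 2 ≤ N) (hf : ConcaveOn ℝ (Set.Icc 0 1) f) :
    ConcaveOn ℝ (Set.Icc (1 / (N : ℝ)) 1) (maxImpurity f N) := by
  have hN₁ : (0 : ℝ) ≤ (N : ℝ) - 1 := by
    have : (2 : ℝ) ≤ N := by exact_mod_cast hN
    linarith
  set g := AffineMap.lineMap (k := ℝ) ((1 : ℝ) / ((N : ℝ) - 1)) 0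
  have hg : ∀ t, g t = (1 - t) / ((N : ℝ) - 1) := fun t => by
    simp [g, AffineMap.lineMap_apply_module, div_eq_mul_inv]
  have hcomp : ConcaveOn ℝ (Set.Icc (1 / (N : ℝ)) 1) fun t => f ((1 - t) / ((N : ℝ) - 1)) :=
    ((hf.comp_affineMap g).subset (fun t ht => by simpa [hg] using one_sub_div_mem_Icc hN ht)
      (convex_Icc _ _)).congr fun t _ => by simp [hg]
  have hIcc : Set.Icc (1 / (N : ℝ)) 1 ⊆ Set.Icc 0 1 :=
    Set.Icc_subset_Icc_left (by positivity)
  exact (hf.subset hIcc (convex_Icc _ _)).add (hcomp.smul hN₁)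

end maxImpurity

section ProbabilityVector

variable {ι : Type*} [Fintype ι] {f : ℝ → ℝ} {p : ι → ℝ}

lemma sum_map_le_maxImpurity (hf : ConcaveOn ℝ (Set.Icc 0 1) f) (hι : 2 ≤ Fintype.card ι)
    (hp : ∀ i, 0 ≤ p i) (hs : ∑ i, p i = 1) (i₀ : ι) :
    ∑ i, f (p i) ≤ maxImpurity f (Fintype.card ι) (p i₀) := by
  classical
  have hrest : ∑ i ∈ univ.erase i₀, p i = 1 - p i₀ := by
    rw [← hs, ← add_sum_erase _ _ (mem_univ i₀)]
    ring
  have hcard : #(univ.erase i₀) = Fintype.card ι - 1 := by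
    rw [card_erase_of_mem (mem_univ _), card_univ]
  have hne : (univ.erase i₀).Nonempty := by
    rw [← card_pos, hcard]
    omega
  have hJensen := (hf.sum_map_le_card_mul_map_average hne fun i _ =>
    ⟨hp i, hs ▸ single_le_sum (fun j _ => hp j) (mem_univ i)⟩)
  rw [hrest, hcard, Nat.cast_sub (by omega), Nat.cast_one] at hJensen
  rw [← add_sum_erase _ _ (mem_univ i₀), maxImpurity]
  linarith

lemma map_div_le_sum_map (hf : ConcaveOn ℝ (Set.Icc 0 1) f) (hf0 : f 0 = 0)
    (hp : ∀ i, 0 ≤ p i) (hs : ∑ i, p i = 1) {M : ℝ} (hpM : ∀ i, p i ≤ M) (hM₀ : 0 < M)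
    (hM₁ : M ≤ 1) :
    f M / M ≤ ∑ i, f (p i) :=
  calc f M / M = ∑ i, p i / M * f M := by rw [← sum_mul, ← sum_div, hs]; ring
    _ ≤ ∑ i, f (p i) := sum_le_sum fun i _ => by
      simpa [div_mul_cancel₀ _ hM₀.ne'] using
        hf.mul_map_le_map_mul (by simp) hf0 ⟨hM₀.le, hM₁⟩ (div_nonneg (hp i) hM₀.le)
          ((div_le_one hM₀).2 (hpM i))

end ProbabilityVector

section colMax

variable {N : ℕ} (hN : 0 < N) {p : Fin N → ℝ}

lemma le_colMax (i : Fin N) : p i ≤ colMax hN p := le_sup' p (mem_univ i)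

lemma exists_eq_colMax : ∃ i, colMax hN p = p i := by
  obtain ⟨i, -, h⟩ := exists_mem_eq_sup' _ p
  exact ⟨i, h⟩

lemma colMax_mem_Icc (hp : ∀ i, 0 ≤ p i) (hs : ∑ i, p i = 1) :
    colMax hN p ∈ Set.Icc (1 / (N : ℝ)) 1 := by
  constructor
  · rw [div_le_iff₀ (by positivity)]
    calc (1 : ℝ) = ∑ i, p i := hs.symm
      _ ≤ ∑ _i : Fin N, colMax hN p := sum_le_sum fun i _ => le_colMax hN i
      _ = colMax hN p * N := by simp [mul_comm]
  · exact sup'_le _ _ fun i _ => hs ▸ single_le_sum (fun j _ => hp j) (mem_univ i)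

end colMax

section Configuration

variable {κ : Type*} [Fintype κ] {N : ℕ} (hN : 0 < N) {w : κ → ℝ} {P : κ → Fin N → ℝ}
  {f : ℝ → ℝ}

lemma sum_mul_colMax_mem_Icc (hw : ∀ k, 0 ≤ w k) (hws : ∑ k, w k = 1)
    (hP : ∀ k i, 0 ≤ P k i) (hPs : ∀ k, ∑ i, P k i = 1) :
    ∑ k, w k * colMax hN (P k) ∈ Set.Icc (1 / (N : ℝ)) 1 :=
  (convex_Icc _ _).sum_mem (fun k _ => hw k) hws fun k _ => colMax_mem_Icc hN (hP k) (hPs k)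

lemma impurity_le_maxImpurity_confidence (hN₂ : 2 ≤ N) (hf : ConcaveOn ℝ (Set.Icc 0 1) f)
    (hw : ∀ k, 0 ≤ w k) (hws : ∑ k, w k = 1)
    (hP : ∀ k i, 0 ≤ P k i) (hPs : ∀ k, ∑ i, P k i = 1) :
    ∑ k, ∑ i, w k * f (P k i) ≤ maxImpurity f N (∑ k, w k * colMax hN (P k)) := by
  have hcell : ∀ k, ∑ i, f (P k i) ≤ maxImpurity f N (colMax hN (P k)) := fun k => by
    obtain ⟨i₀, hi₀⟩ := exists_eq_colMax hN (p := P k)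
    simpa [hi₀] using sum_map_le_maxImpurity hf (by simpa) (hP k) (hPs k) i₀
  calc ∑ k, ∑ i, w k * f (P k i) = ∑ k, w k * ∑ i, f (P k i) := by simp only [mul_sum]
    _ ≤ ∑ k, w k * maxImpurity f N (colMax hN (P k)) :=
      sum_le_sum fun k _ => mul_le_mul_of_nonneg_left (hcell k) (hw k)
    _ ≤ maxImpurity f N (∑ k, w k * colMax hN (P k)) :=
      (concaveOn_maxImpurity hN₂ hf).le_map_sum (fun k _ => hw k) hws
        fun k _ => colMax_mem_Icc hN (hP k) (hPs k)

lemma map_confidence_le_impurity {l : ℝ → ℝ} (hf : ConcaveOn ℝ (Set.Icc 0 1) f)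
    (hf0 : f 0 = 0) (hl : ConvexOn ℝ (Set.Icc (1 / (N : ℝ)) 1) l)
    (hfl : ∀ x ∈ Set.Ioc (0 : ℝ) 1, f x = x * l x)
    (hw : ∀ k, 0 ≤ w k) (hws : ∑ k, w k = 1)
    (hP : ∀ k i, 0 ≤ P k i) (hPs : ∀ k, ∑ i, P k i = 1) :
    l (∑ k, w k * colMax hN (P k)) ≤ ∑ k, ∑ i, w k * f (P k i) := by
  have hcell : ∀ k, l (colMax hN (P k)) ≤ ∑ i, f (P k i) := fun k => by
    obtain ⟨hM₁, hM₂⟩ := colMax_mem_Icc hN (hP k) (hPs k)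
    have hM₀ : 0 < colMax hN (P k) := lt_of_lt_of_le (by positivity) hM₁
    calc l (colMax hN (P k)) = f (colMax hN (P k)) / colMax hN (P k) := by
          rw [hfl _ ⟨hM₀, hM₂⟩, mul_div_cancel_left₀ _ hM₀.ne']
      _ ≤ ∑ i, f (P k i) := map_div_le_sum_map hf hf0 (hP k) (hPs k) (le_colMax hN) hM₀ hM₂
  calc l (∑ k, w k * colMax hN (P k)) ≤ ∑ k, w k * l (colMax hN (P k)) :=
        hl.map_sum_le (fun k _ => hw k) hws fun k _ => colMax_mem_Icc hN (hP k) (hPs k)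
    _ ≤ ∑ k, w k * ∑ i, f (P k i) :=
      sum_le_sum fun k _ => mul_le_mul_of_nonneg_left (hcell k) (hw k)
    _ = ∑ k, ∑ i, w k * f (P k i) := by simp only [mul_sum]

end Configuration

/-- Paper's Theorem 5: a configuration with larger confidence is an
`R(e) = u(e)/l(e)` approximation of the other, i.e.
`l(e₁) * I₁ ≤ u(e₁) * I₂` where `u(t) = f(t) + (N-1) f((1-t)/(N-1))`. -/
theorem R_emax_approximation (N K₁ K₂ : ℕ) (hN : 2 ≤ N)
    (f l : ℝ → ℝ)
    (hf : ConcaveOn ℝ (Set.Icc (0 : ℝ) 1) f) (hf0 : f 0 = 0)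
    (hfnn : ∀ x ∈ Set.Icc (0 : ℝ) 1, 0 ≤ f x)
    (hl : ConvexOn ℝ (Set.Icc (1 / (N : ℝ)) 1) l)
    (hlmono : AntitoneOn l (Set.Icc (1 / (N : ℝ)) 1))
    (hfl : ∀ x ∈ Set.Ioc (0 : ℝ) 1, f x = x * l x)
    (w₁ : Fin K₁ → ℝ) (hw₁ : ∀ k, 0 ≤ w₁ k) (hws₁ : ∑ k, w₁ k = 1)
    (P₁ : Fin K₁ → Fin N → ℝ) (hP₁ : ∀ k i, 0 ≤ P₁ k i) (hPs₁ : ∀ k, ∑ i, P₁ k i = 1)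
    (w₂ : Fin K₂ → ℝ) (hw₂ : ∀ k, 0 ≤ w₂ k) (hws₂ : ∑ k, w₂ k = 1)
    (P₂ : Fin K₂ → Fin N → ℝ) (hP₂ : ∀ k i, 0 ≤ P₂ k i) (hPs₂ : ∀ k, ∑ i, P₂ k i = 1)
    (e₁ e₂ : ℝ)
    (he₁ : e₁ = ∑ k, w₁ k * colMax (by omega) (P₁ k))
    (he₂ : e₂ = ∑ k, w₂ k * colMax (by omega) (P₂ k))
    (hee : e₂ ≤ e₁) :
    l e₁ * (∑ k, ∑ i, w₁ k * f (P₁ k i)) ≤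
      (f e₁ + ((N : ℝ) - 1) * f ((1 - e₁) / ((N : ℝ) - 1))) *
        (∑ k, ∑ i, w₂ k * f (P₂ k i)) := by
  have hN₀ : 0 < N := by omega
  have he₁mem : e₁ ∈ Set.Icc (1 / (N : ℝ)) 1 :=
    he₁ ▸ sum_mul_colMax_mem_Icc hN₀ hw₁ hws₁ hP₁ hPs₁
  have he₂mem : e₂ ∈ Set.Icc (1 / (N : ℝ)) 1 :=
    he₂ ▸ sum_mul_colMax_mem_Icc hN₀ hw₂ hws₂ hP₂ hPs₂
  have hI₁ : ∑ k, ∑ i, w₁ k * f (P₁ k i) ≤ maxImpurity f N e₁ :=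
    he₁ ▸ impurity_le_maxImpurity_confidence hN₀ hN hf hw₁ hws₁ hP₁ hPs₁
  have hI₂ : l e₁ ≤ ∑ k, ∑ i, w₂ k * f (P₂ k i) :=
    (hlmono he₂mem he₁mem hee).trans
      (he₂ ▸ map_confidence_le_impurity hN₀ hf hf0 hl hfl hw₂ hws₂ hP₂ hPs₂)
  have hl₁ : 0 ≤ l e₁ := by
    have h1 : (1 : ℝ) ∈ Set.Icc (1 / (N : ℝ)) 1 := ⟨he₁mem.1.trans he₁mem.2, le_rfl⟩
    have := hfnn 1 ⟨zero_le_one, le_rfl⟩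
    rw [hfl 1 ⟨zero_lt_one, le_rfl⟩, one_mul] at this
    exact this.trans (hlmono he₁mem h1 he₁mem.2)
  have hu₁ : 0 ≤ maxImpurity f N e₁ := maxImpurity_nonneg hN hfnn he₁mem
  calc l e₁ * ∑ k, ∑ i, w₁ k * f (P₁ k i) ≤ l e₁ * maxImpurity f N e₁ :=
        mul_le_mul_of_nonneg_left hI₁ hl₁
    _ ≤ maxImpurity f N e₁ * ∑ k, ∑ i, w₂ k * f (P₂ k i) := by
      rw [mul_comm]
      exact mul_le_mul_of_nonneg_left hI₂ hu₁
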